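/- Let k₁,...,k_m and n₁,...,n_m be positive integers and M = ⊕ᵢ I_{kᵢ} ⊗ M_{nᵢ}(ℂ) ⊆ M_d(ℂ), d = Σᵢ kᵢnᵢ. If M admits a basis of unitaries orthogonal under the normalized trace inner product (1/d)tr(AB*), then there is a constant c with nᵢ = c·kᵢ for all i. -/

import Mathlib

/-! Expanding `E ∈ M` in an orthogonal unitary basis `(uₐ)` gives Parseval's identity
`d · tr(E E*) = Σₐ |tr(E uₐ*)|²`. For `E = I_{kᵢ} ⊗ e_{pq}` in the `i`-th block this reads
`d kᵢ = kᵢ² Σₐ |(uₐ)ᵢ(p, q)|²`, so every entry position of the `i`-th block carries the same weight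
`d / kᵢ`. Summing over the `nᵢ²` positions, and using that each block `(uₐ)ᵢ` is unitary and so
has squared Frobenius norm `nᵢ`, gives `nᵢ² d = kᵢ N nᵢ`, i.e. `nᵢ / kᵢ = N / d` for every `i`. -/

open Matrix Kronecker Finset

/-- Membership in the block algebra `M = ⊕ᵢ I_{kᵢ} ⊗ M_{nᵢ}(ℂ)`. -/
def MemBlockAlg {m : ℕ} (k n : Fin m → ℕ)
    (A : Matrix ((i : Fin m) × (Fin (k i) × Fin (n i)))
      ((i : Fin m) × (Fin (k i) × Fin (n i))) ℂ) : Prop :=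
  ∃ B : ∀ i, Matrix (Fin (n i)) (Fin (n i)) ℂ,
    A = Matrix.blockDiagonal' fun i => (1 : Matrix (Fin (k i)) (Fin (k i)) ℂ) ⊗ₖ B i

section Parseval

variable {R ι n : Type*} [CommSemiring R] [StarRing R] [Fintype ι] [Fintype n] [DecidableEq n]
  {u : ι → Matrix n n R}

theorem trace_sum_smul_mul_conjTranspose_of_orthogonal
    (horth : Pairwise fun a b => trace (u a * (u b)ᴴ) = 0) (hunit : ∀ a, u a * (u a)ᴴ = 1)
    (c : ι → R) (b : ι) :
    trace ((∑ a, c a • u a) * (u b)ᴴ) = c b * Fintype.card n := by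
  rw [Matrix.sum_mul, trace_sum, Finset.sum_eq_single b]
  · rw [smul_mul_assoc, trace_smul, hunit, trace_one, smul_eq_mul]
  · intro a _ hab
    rw [smul_mul_assoc, trace_smul, horth hab, smul_zero]
  · simp

theorem card_mul_trace_mul_conjTranspose_of_mem_span
    (horth : Pairwise fun a b => trace (u a * (u b)ᴴ) = 0) (hunit : ∀ a, u a * (u a)ᴴ = 1)
    {E : Matrix n n R} (hE : E ∈ Submodule.span R (Set.range u)) :
    Fintype.card n * trace (E * Eᴴ) =
      ∑ b, trace (E * (u b)ᴴ) * star (trace (E * (u b)ᴴ)) := by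
  obtain ⟨c, rfl⟩ := (Submodule.mem_span_range_iff_exists_fun R).mp hE
  simp only [trace_sum_smul_mul_conjTranspose_of_orthogonal horth hunit, star_mul', star_natCast]
  conv_lhs => rw [conjTranspose_sum, Matrix.mul_sum, trace_sum]
  simp only [conjTranspose_smul, Matrix.mul_smul, trace_smul, smul_eq_mul,
    trace_sum_smul_mul_conjTranspose_of_orthogonal horth hunit, Finset.mul_sum]
  refine Finset.sum_congr rfl fun b _ => ?_
  ring

end Parseval

theorem sum_sum_mul_star_eq_trace_mul_conjTranspose {R m n : Type*} [CommSemiring R]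
    [StarRing R] [Fintype m] [Fintype n] (X : Matrix m n R) :
    ∑ p, ∑ q, X p q * star (X p q) = trace (X * Xᴴ) := by
  simp [trace, mul_apply]

section BlockAmpliation

variable {R o : Type*} [CommSemiring R] [DecidableEq o] (l : o → Type*) {n : o → Type*}
  [∀ i, DecidableEq (l i)]

def blockAmpliation (B : ∀ i, Matrix (n i) (n i) R) :
    Matrix ((i : o) × (l i × n i)) ((i : o) × (l i × n i)) R :=
  blockDiagonal' fun i => (1 : Matrix (l i) (l i) R) ⊗ₖ B i

theorem blockAmpliation_mul [Fintype o] [∀ i, Fintype (l i)] [∀ i, Fintype (n i)]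
    (B C : ∀ i, Matrix (n i) (n i) R) :
    blockAmpliation l B * blockAmpliation l C = blockAmpliation l fun i => B i * C i := by
  simp only [blockAmpliation, ← blockDiagonal'_mul, ← mul_kronecker_mul, one_mul]

theorem conjTranspose_blockAmpliation [StarRing R] (B : ∀ i, Matrix (n i) (n i) R) :
    (blockAmpliation l B)ᴴ = blockAmpliation l fun i => (B i)ᴴ := by
  simp only [blockAmpliation, blockDiagonal'_conjTranspose, conjTranspose_kronecker,
    conjTranspose_one]

theorem trace_blockAmpliation [Fintype o] [∀ i, Fintype (l i)] [∀ i, Fintype (n i)]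
    (B : ∀ i, Matrix (n i) (n i) R) :
    trace (blockAmpliation l B) = ∑ i, Fintype.card (l i) * trace (B i) := by
  simp only [blockAmpliation, trace_blockDiagonal', trace_kronecker, trace_one]

variable {l} in
theorem eq_one_of_blockAmpliation_eq_one [∀ i, DecidableEq (n i)]
    {B : ∀ i, Matrix (n i) (n i) R}
    (h : blockAmpliation l B = 1) (i : o) [Nonempty (l i)] : B i = 1 := by
  obtain ⟨r⟩ := ‹Nonempty (l i)›
  ext p q
  simpa [blockAmpliation, kronecker_apply, one_apply] using
    congr_fun₂ h ⟨i, r, p⟩ ⟨i, r, q⟩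

theorem trace_blockAmpliation_single_mul_conjTranspose [StarRing R] [Fintype o]
    [∀ i, Fintype (l i)] [∀ i, Fintype (n i)] [∀ i, DecidableEq (n i)]
    (i : o) (p q : n i) (B : ∀ i, Matrix (n i) (n i) R) :
    trace (blockAmpliation l (Pi.single i (single p q 1)) * (blockAmpliation l B)ᴴ) =
      Fintype.card (l i) * star (B i p q) := by
  rw [conjTranspose_blockAmpliation, blockAmpliation_mul, trace_blockAmpliation,
    Finset.sum_eq_single i]
  · simp [trace_single_mul]
  · intro j _ hj
    simp [Pi.single_eq_of_ne hj]
  · simp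

theorem card_mul_card_eq_of_orthogonal_unitary_basis [StarRing R] [CharZero R] [Fintype o]
    [∀ i, Fintype (l i)] [∀ i, Fintype (n i)] [∀ i, DecidableEq (n i)] {ι : Type*} [Fintype ι]
    {B : ι → ∀ i, Matrix (n i) (n i) R}
    (hunit : ∀ b, blockAmpliation l (B b) * (blockAmpliation l (B b))ᴴ = 1)
    (horth : Pairwise fun a b =>
      trace (blockAmpliation l (B a) * (blockAmpliation l (B b))ᴴ) = 0)
    (hspan : ∀ C, blockAmpliation l C ∈
      Submodule.span R (Set.range fun b => blockAmpliation l (B b)))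
    (i : o) [Nonempty (l i)] [Nonempty (n i)] :
    Fintype.card (n i) * Fintype.card ((i : o) × (l i × n i)) =
      Fintype.card (l i) * Fintype.card ι := by
  set D := Fintype.card ((i : o) × (l i × n i))
  set K := Fintype.card (l i)
  have hentry (p q : n i) : (D * K : R) = K ^ 2 * ∑ b, B b i p q * star (B b i p q) := by
    have h := card_mul_trace_mul_conjTranspose_of_mem_span horth hunit
      (hspan (Pi.single i (single p q 1)))
    simp only [trace_blockAmpliation_single_mul_conjTranspose, Pi.single_eq_same,
      single_apply_same, star_one, mul_one, star_mul', star_natCast, star_star] at h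
    rw [h, Finset.mul_sum]
    exact Finset.sum_congr rfl fun b _ => by ring
  have hblock : ∑ b, trace (B b i * (B b i)ᴴ) = (Fintype.card ι * Fintype.card (n i) : R) := by
    have h b := eq_one_of_blockAmpliation_eq_one
      (by rw [← hunit b, conjTranspose_blockAmpliation, blockAmpliation_mul]) i
    simp [h]
  have hcast : ((D * K * Fintype.card (n i) ^ 2 : ℕ) : R) =
      ((K ^ 2 * Fintype.card ι * Fintype.card (n i) : ℕ) : R) := by
    calc ((D * K * Fintype.card (n i) ^ 2 : ℕ) : R)
        = ∑ p : n i, ∑ q : n i, (D * K : R) := by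
          simp only [Nat.cast_mul, Nat.cast_pow, sum_const, card_univ, nsmul_eq_mul]; ring
      _ = ∑ p : n i, ∑ q : n i, K ^ 2 * ∑ b, B b i p q * star (B b i p q) :=
          Finset.sum_congr rfl fun p _ => Finset.sum_congr rfl fun q _ => hentry p q
      _ = K ^ 2 * ∑ b, trace (B b i * (B b i)ᴴ) := by
          simp only [← Finset.mul_sum, ← sum_sum_mul_star_eq_trace_mul_conjTranspose]
          rw [Finset.sum_congr rfl fun p _ => Finset.sum_comm, Finset.sum_comm]
      _ = _ := by rw [hblock]; push_cast; ring
  have hpos : 0 < K * Fintype.card (n i) := Nat.mul_pos Fintype.card_pos Fintype.card_pos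
  refine Nat.eq_of_mul_eq_mul_left hpos ?_
  linear_combination Nat.cast_injective hcast

end BlockAmpliation

/-- If `M = ⊕ᵢ I_{kᵢ} ⊗ M_{nᵢ}(ℂ) ⊆ M_d(ℂ)`, `d = Σ kᵢnᵢ`, admits a basis of unitaries
orthogonal under `(1/d)tr(AB*)`, then `nᵢ = c·kᵢ` for some constant `c` and all `i`. -/
theorem const_ratio_of_orthogonal_unitary_basis (m : ℕ) (k n : Fin m → ℕ)
    (hk : ∀ i, 0 < k i) (hn : ∀ i, 0 < n i) (d : ℕ) (hd : d = ∑ i, k i * n i)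
    (hbasis : ∃ (N : ℕ) (u : Fin N → Matrix ((i : Fin m) × (Fin (k i) × Fin (n i)))
        ((i : Fin m) × (Fin (k i) × Fin (n i))) ℂ),
      (∀ a, MemBlockAlg k n (u a)) ∧
      (∀ a, u a * (u a)ᴴ = 1) ∧
      (∀ a b, a ≠ b → (1 / (d : ℂ)) * Matrix.trace (u a * (u b)ᴴ) = 0) ∧
      LinearIndependent ℂ u ∧
      (∀ A, MemBlockAlg k n A → A ∈ Submodule.span ℂ (Set.range u))) :
    ∃ c : ℚ, ∀ i, (n i : ℚ) = c * (k i : ℚ) := by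
  obtain ⟨N, u, hmem, hunit, horth, -, hspan⟩ := hbasis
  choose B hB using hmem
  obtain rfl : u = fun a => blockAmpliation (fun i => Fin (k i)) (B a) := funext hB
  refine ⟨N / d, fun i => ?_⟩
  have hd_pos : 0 < d := hd ▸ (Nat.mul_pos (hk i) (hn i)).trans_le
    (Finset.single_le_sum (fun j _ => Nat.zero_le (k j * n j)) (Finset.mem_univ i))
  have : Nonempty (Fin (k i)) := Fin.pos_iff_nonempty.mp (hk i)
  have : Nonempty (Fin (n i)) := Fin.pos_iff_nonempty.mp (hn i)
  have key := card_mul_card_eq_of_orthogonal_unitary_basis _ hunit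
    (fun a b hab => by simpa [hd_pos.ne'] using horth a b hab) (fun C => hspan _ ⟨C, rfl⟩) i
  simp only [Fintype.card_fin, Fintype.card_sigma, Fintype.card_prod, ← hd] at key
  rw [div_mul_eq_mul_div, eq_div_iff (by exact_mod_cast hd_pos.ne'), mul_comm (N : ℚ)]
  exact_mod_cast key
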